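/- For integers N ≥ 2, 1 ≤ j ≤ N−1, and 0 ≤ m ≤ N−1, the symmetric Krawtchouk values satisfy the partial sum-of-squares identity ∑_{n=0}^m (N−2n)·(Φ^N_{n,j})² = (N−j)·(Φ^{N−1}_{m,j})² + j·(Φ^{N−1}_{m,j−1})². -/
import Mathlib

open Polynomial Finset

lemma coeff_one_sub_X_pow (j k : ℕ) :
    ((1 - X : ℤ[X]) ^ j).coeff k = (-1 : ℤ) ^ k * j.choose k := by
  have h : (1 - X : ℤ[X]) ^ j
      = ∑ i ∈ Finset.range (j + 1), Polynomial.C ((-1 : ℤ) ^ i * (j.choose i : ℤ)) * X ^ i := by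
    rw [sub_eq_neg_add, add_pow]
    apply Finset.sum_congr rfl
    intro i _
    rw [neg_pow]
    simp only [one_pow, mul_one, map_mul, map_pow, map_neg, map_one,
      Polynomial.C_eq_natCast]
    ring
  rw [h, Polynomial.finset_sum_coeff]
  simp only [Polynomial.coeff_C_mul, Polynomial.coeff_X_pow, mul_ite, mul_one, mul_zero]
  rw [Finset.sum_ite_eq (Finset.range (j+1)) k]
  split_ifs with hk
  · rfl
  · rw [Finset.mem_range, not_lt] at hk
    rw [Nat.choose_eq_zero_of_lt (by omega)]
    simp

/-- Symmetric Krawtchouk values: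
`Φ^N_{n,j} = ∑_k (-1)^k C(j,k) C(N-j, n-k)`, the coefficient of `z^n` in
`(1+z)^(N-j) (1-z)^j`. -/
def symKrawtchouk (N n j : ℕ) : ℤ :=
  ∑ k ∈ Finset.range (j + 1),
    if k ≤ n then (-1 : ℤ) ^ k * (j.choose k) * ((N - j).choose (n - k)) else 0

lemma symKrawtchouk_eq_coeff (N n j : ℕ) :
    symKrawtchouk N n j = ((1 - X : ℤ[X]) ^ j * (1 + X) ^ (N - j)).coeff n := by
  rw [Polynomial.coeff_mul, Finset.Nat.sum_antidiagonal_eq_sum_range_succ_mk]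
  simp only [coeff_one_sub_X_pow, Polynomial.coeff_one_add_X_pow]
  have key : ∀ k, (if k ≤ n then (-1 : ℤ) ^ k * (j.choose k) * ((N - j).choose (n - k)) else 0)
      = (if k ≤ n ∧ k ≤ j then (-1 : ℤ) ^ k * (j.choose k) * ((N - j).choose (n - k)) else 0) := by
    intro k
    by_cases h2 : k ≤ j
    · by_cases h1 : k ≤ n <;> simp [h1, h2]
    · by_cases h1 : k ≤ n <;>
        simp [h1, h2, Nat.choose_eq_zero_of_lt (show j < k by omega)]
  calc symKrawtchouk N n j
      = ∑ k ∈ Finset.range (j + 1),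
          (if k ≤ n ∧ k ≤ j then (-1 : ℤ) ^ k * (j.choose k) * ((N - j).choose (n - k)) else 0) := by
        exact Finset.sum_congr rfl fun k _ => key k
    _ = ∑ k ∈ Finset.range (n + j + 2),
          (if k ≤ n ∧ k ≤ j then (-1 : ℤ) ^ k * (j.choose k) * ((N - j).choose (n - k)) else 0) := by
        apply Finset.sum_subset
        · intro x hx; simp only [Finset.mem_range] at *; omega
        · intro x _ hx
          simp only [Finset.mem_range, not_lt] at hx
          rw [if_neg (by omega)]
    _ = ∑ k ∈ Finset.range (n + 1),
          (if k ≤ n ∧ k ≤ j then (-1 : ℤ) ^ k * (j.choose k) * ((N - j).choose (n - k)) else 0) := by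
        symm
        apply Finset.sum_subset
        · intro x hx; simp only [Finset.mem_range] at *; omega
        · intro x _ hx
          simp only [Finset.mem_range, not_lt] at hx
          rw [if_neg (by omega)]
    _ = ∑ k ∈ Finset.range (n + 1), (-1 : ℤ) ^ k * (j.choose k) * ((N - j).choose (n - k)) := by
        apply Finset.sum_congr rfl
        intro k hk
        simp only [Finset.mem_range] at hk
        rw [← key k, if_pos (by omega)]
    _ = _ := by
        apply Finset.sum_congr rfl
        intro k _
        ring

lemma coeff_one_sub_mul (p : ℤ[X]) (n : ℕ) :
    ((1 - X) * p).coeff (n + 1) = p.coeff (n + 1) - p.coeff n := by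
  rw [sub_mul, one_mul, Polynomial.coeff_sub, Polynomial.coeff_X_mul]

lemma coeff_one_add_mul (p : ℤ[X]) (n : ℕ) :
    ((1 + X) * p).coeff (n + 1) = p.coeff (n + 1) + p.coeff n := by
  rw [add_mul, one_mul, Polynomial.coeff_add, Polynomial.coeff_X_mul]

lemma key_deriv (a b n : ℕ) :
    ((n : ℤ) + 1) * (((1 - X : ℤ[X]) ^ (b + 1) * (1 + X) ^ (a + 1)).coeff (n + 1))
      = ((a : ℤ) + 1) * (((1 - X : ℤ[X]) ^ (b + 1) * (1 + X) ^ a).coeff n)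
        - ((b : ℤ) + 1) * (((1 - X : ℤ[X]) ^ b * (1 + X) ^ (a + 1)).coeff n) := by
  have hd : Polynomial.derivative ((1 - X : ℤ[X]) ^ (b + 1) * (1 + X) ^ (a + 1))
      = Polynomial.C ((a : ℤ) + 1) * ((1 - X) ^ (b + 1) * (1 + X) ^ a)
        - Polynomial.C ((b : ℤ) + 1) * ((1 - X) ^ b * (1 + X) ^ (a + 1)) := by
    rw [Polynomial.derivative_mul, Polynomial.derivative_pow, Polynomial.derivative_pow]
    simp only [Polynomial.derivative_sub, Polynomial.derivative_add, Polynomial.derivative_one,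
      Polynomial.derivative_X, Nat.add_sub_cancel]
    push_cast
    ring
  have h := congrArg (fun p => Polynomial.coeff p n) hd
  simp only [Polynomial.coeff_derivative, Polynomial.coeff_sub, Polynomial.coeff_C_mul] at h
  linarith

lemma step_identity (a b n : ℕ) :
    (((a + b + 2 : ℕ) : ℤ) - 2 * (n + 1)) *
        (((1 - X : ℤ[X]) ^ (b + 1) * (1 + X) ^ (a + 1)).coeff (n + 1)) ^ 2
      = ((a : ℤ) + 1) * ((((1 - X : ℤ[X]) ^ (b + 1) * (1 + X) ^ a).coeff (n + 1)) ^ 2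
            - (((1 - X : ℤ[X]) ^ (b + 1) * (1 + X) ^ a).coeff n) ^ 2)
        + ((b : ℤ) + 1) * ((((1 - X : ℤ[X]) ^ b * (1 + X) ^ (a + 1)).coeff (n + 1)) ^ 2
            - (((1 - X : ℤ[X]) ^ b * (1 + X) ^ (a + 1)).coeff n) ^ 2) := by
  set P : ℤ[X] := (1 - X) ^ (b + 1) * (1 + X) ^ (a + 1) with hP
  set A : ℤ[X] := (1 - X) ^ (b + 1) * (1 + X) ^ a with hA
  set Cq : ℤ[X] := (1 - X) ^ b * (1 + X) ^ (a + 1) with hCq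
  have h1 : P.coeff (n + 1) = A.coeff (n + 1) + A.coeff n := by
    have : P = (1 + X) * A := by rw [hP, hA, pow_succ]; ring
    rw [this, coeff_one_add_mul]
  have h2 : P.coeff (n + 1) = Cq.coeff (n + 1) - Cq.coeff n := by
    have : P = (1 - X) * Cq := by rw [hP, hCq, pow_succ (1 - X : ℤ[X])]; ring
    rw [this, coeff_one_sub_mul]
  have h3 := key_deriv a b n
  rw [← hP, ← hA, ← hCq] at h3
  have hA1 : A.coeff (n + 1) = P.coeff (n + 1) - A.coeff n := by linarith
  have hC1 : Cq.coeff (n + 1) = P.coeff (n + 1) + Cq.coeff n := by linarith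
  rw [hA1, hC1]
  push_cast
  linear_combination (-2 * P.coeff (n + 1)) * h3

lemma key_sum (a b m : ℕ) :
    ∑ n ∈ Finset.range (m + 1), (((a + b + 2 : ℕ) : ℤ) - 2 * n) *
        (((1 - X : ℤ[X]) ^ (b + 1) * (1 + X) ^ (a + 1)).coeff n) ^ 2
      = ((a : ℤ) + 1) * (((1 - X : ℤ[X]) ^ (b + 1) * (1 + X) ^ a).coeff m) ^ 2
        + ((b : ℤ) + 1) * (((1 - X : ℤ[X]) ^ b * (1 + X) ^ (a + 1)).coeff m) ^ 2 := by
  induction m with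
  | zero =>
    rw [Finset.sum_range_one]
    simp only [Polynomial.coeff_zero_eq_eval_zero, Polynomial.eval_mul, Polynomial.eval_pow,
      Polynomial.eval_sub, Polynomial.eval_add, Polynomial.eval_one, Polynomial.eval_X]
    push_cast
    ring
  | succ m ih =>
    rw [Finset.sum_range_succ, ih]
    have := step_identity a b m
    push_cast at this ⊢
    linarith [this]

/-- Partial sum-of-squares identity for symmetric Krawtchouk values:
`∑_{n=0}^m (N−2n)·(Φ^N_{n,j})² = (N−j)·(Φ^{N−1}_{m,j})² + j·(Φ^{N−1}_{m,j−1})²`. -/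
theorem symKrawtchouk_partial_sq_sum (N j m : ℕ)
    (hN : 2 ≤ N) (hj1 : 1 ≤ j) (hj : j ≤ N - 1) (hm : m ≤ N - 1) :
    ∑ n ∈ Finset.range (m + 1), ((N : ℤ) - 2 * n) * (symKrawtchouk N n j) ^ 2 =
      ((N : ℤ) - j) * (symKrawtchouk (N - 1) m j) ^ 2
        + (j : ℤ) * (symKrawtchouk (N - 1) m (j - 1)) ^ 2 := by
  obtain ⟨b, rfl⟩ : ∃ b, j = b + 1 := ⟨j - 1, by omega⟩
  obtain ⟨a, rfl⟩ : ∃ a, N = a + b + 2 := ⟨N - b - 2, by omega⟩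
  simp only [symKrawtchouk_eq_coeff]
  simp only [show a + b + 2 - (b + 1) = a + 1 from by omega,
    show a + b + 2 - 1 - (b + 1) = a from by omega,
    show b + 1 - 1 = b from by omega,
    show a + b + 2 - 1 - b = a + 1 from by omega]
  rw [key_sum a b m]
  push_cast
  ring
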